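/- Let Φ be an absolutely continuous nonnegative function on [s, t₀] satisfying Φ'(t) + 2εΦ(t) ≤ g(t)Φ(t) + f(t) for a.e. t ∈ [s,t₀], where ε > 0, and f, g are nonnegative integrable functions satisfying ∫_t^{min(t₀,t+1)} f(τ)dτ ≤ F for all t ∈ [s,t₀], and ∫_{t₁}^{t₂} g(τ)dτ ≤ G(1 + (t₂-t₁)^β) for all s ≤ t₁ ≤ t₂ ≤ t₀, for some constants F, G > 0 and β ∈ [0,1). Then there exists Γ = Γ(G,β,ε) ≥ 1 such that Φ(t₀) ≤ Γ·Φ(s)·e^{-ε(t₀-s)} + Γ·F·e^ε/(1 - e^{-ε}). -/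

import Mathlib

/-!
With `ψ t = Φ t * exp (2 ε t)` the hypothesis reads `ψ' ≤ g ψ + f e^{2εt}`, and Gronwall's
inequality for the merely integrable kernel `g` gives
`Φ t₀ ≤ Φ s e^{-2ε(t₀-s)} e^{∫_s^{t₀} g} + ∫_s^{t₀} f τ e^{-2ε(t₀-τ)} e^{∫_τ^{t₀} g} dτ`.
Since `β < 1`, `G (1 + x ^ β) ≤ C + ε x` for some `C`, so every factor `e^{∫_τ^{t₀} g}` is at
most `e^C e^{ε(t₀-τ)}`: half of the decay rate survives, and `Γ = e^C`. Cutting `[s, t₀]` into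
unit windows counted back from `t₀`, the remaining forcing term is at most
`∑ₖ F e^{-εk} = F / (1 - e^{-ε})`.
-/

open MeasureTheory Set Filter Real

theorem LipschitzOnWith.comp_absolutelyContinuousOnInterval {X Y : Type*} [PseudoMetricSpace X]
    [PseudoMetricSpace Y] {φ : X → Y} {K : NNReal} {s : Set X} {f : ℝ → X} {a b : ℝ}
    (hφ : LipschitzOnWith K φ s) (hf : AbsolutelyContinuousOnInterval f a b)
    (hfs : MapsTo f (uIcc a b) s) : AbsolutelyContinuousOnInterval (φ ∘ f) a b := by
  have hK := Tendsto.const_mul (K : ℝ) (show Tendsto _ _ _ from hf)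
  rw [mul_zero] at hK
  refine squeeze_zero' (Eventually.of_forall fun _ ↦ Finset.sum_nonneg fun _ _ ↦ dist_nonneg)
    ?_ hK
  filter_upwards [mem_inf_of_right (mem_principal_self _)] with E hE
  rw [Finset.mul_sum]
  exact Finset.sum_le_sum fun i hi ↦
    hφ.dist_le_mul _ (hfs (hE.1 i hi).1) _ (hfs (hE.1 i hi).2)

theorem lipschitzOnWith_one_exp_Iic_zero : LipschitzOnWith 1 exp (Iic 0) :=
  (convex_Iic 0).lipschitzOnWith_of_nnnorm_hasDerivWithin_le
    (fun x _ ↦ (hasDerivAt_exp x).hasDerivWithinAt) fun x hx ↦ by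
      rw [← NNReal.coe_le_coe, coe_nnnorm, norm_of_nonneg (exp_pos x).le, NNReal.coe_one]
      exact exp_le_one_iff.2 hx

theorem le_mul_exp_add_integral_of_le_add_integral {u g h : ℝ → ℝ} {a b A : ℝ} (hab : a ≤ b)
    (hu : ContinuousOn u (Icc a b)) (hg : IntervalIntegrable g volume a b)
    (hh : IntervalIntegrable h volume a b) (hg0 : ∀ t ∈ Icc a b, 0 ≤ g t)
    (hle : ∀ t ∈ Icc a b, u t ≤ A + ∫ τ in a..t, (g τ * u τ + h τ)) :
    u b ≤ A * exp (∫ τ in a..b, g τ) + ∫ τ in a..b, h τ * exp (∫ σ in τ..b, g σ) := by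
  set K : ℝ → ℝ := fun t ↦ ∫ τ in a..t, g τ
  set V : ℝ → ℝ := fun t ↦ ∫ τ in a..t, (g τ * u τ + h τ)
  have ha : a ∈ uIcc a b := left_mem_uIcc
  have hgu : IntervalIntegrable (fun τ ↦ g τ * u τ + h τ) volume a b :=
    (hg.mul_continuousOn (by rwa [uIcc_of_le hab])).add hh
  have hK0 : MapsTo (fun t ↦ -K t) (uIcc a b) (Iic 0) := fun t ht ↦ by
    rw [uIcc_of_le hab] at ht
    exact neg_nonpos.2 (intervalIntegral.integral_nonneg ht.1 fun τ hτ ↦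
      hg0 τ ⟨hτ.1, hτ.2.trans ht.2⟩)
  have hE : AbsolutelyContinuousOnInterval (fun t ↦ exp (-K t)) a b :=
    lipschitzOnWith_one_exp_Iic_zero.comp_absolutelyContinuousOnInterval
      (hg.absolutelyContinuousOnInterval_intervalIntegral ha).fun_neg hK0
  have hW : AbsolutelyContinuousOnInterval (fun t ↦ (A + V t) * exp (-K t)) a b :=
    ((LipschitzWith.const A).lipschitzOnWith.absolutelyContinuousOnInterval.fun_add
      (hgu.absolutelyContinuousOnInterval_intervalIntegral ha)).fun_mul hE
  -- `(A + V) e^{-K}` is nonincreasing up to the source term, because `u ≤ A + V` and `g ≥ 0`.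
  have hderiv : ∀ᵐ t, t ∈ Icc a b →
      deriv (fun t ↦ (A + V t) * exp (-K t)) t ≤ h t * exp (-K t) := by
    rw [← uIcc_of_le hab]
    filter_upwards [hgu.ae_hasDerivAt_integral, hg.ae_hasDerivAt_integral] with t hV' hK' ht
    have hWt : HasDerivAt (fun t ↦ (A + V t) * exp (-K t))
        ((g t * u t + h t) * exp (-K t) + (A + V t) * (exp (-K t) * -g t)) t :=
      ((hV' ht a ha).const_add A).mul (hK' ht a ha).neg.exp
    rw [hWt.deriv]
    rw [uIcc_of_le hab] at ht
    nlinarith [mul_nonneg (mul_nonneg (exp_pos (-K t)).le (hg0 t ht)) (sub_nonneg.2 (hle t ht))]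
  have hW_le : (A + V b) * exp (-K b) ≤ A + ∫ τ in a..b, h τ * exp (-K τ) := by
    have := hW.integral_deriv_eq_sub ▸ intervalIntegral.integral_mono_ae_restrict hab
      hW.intervalIntegrable_deriv (hh.mul_continuousOn hE.continuousOn)
      ((ae_restrict_iff' measurableSet_Icc).2 hderiv)
    simp only [K, V, intervalIntegral.integral_same, neg_zero, exp_zero, add_zero, mul_one] at this
    linarith
  have hweight : ∫ τ in a..b, h τ * exp (∫ σ in τ..b, g σ)
      = (∫ τ in a..b, h τ * exp (-K τ)) * exp (K b) := by
    rw [← intervalIntegral.integral_mul_const]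
    refine intervalIntegral.integral_congr fun τ hτ ↦ ?_
    rw [← intervalIntegral.integral_interval_sub_left hg (hg.mono_set (uIcc_subset_uIcc ha hτ)),
      mul_assoc, ← exp_add, neg_add_eq_sub]
  calc u b ≤ A + V b := hle b (right_mem_Icc.2 hab)
    _ = (A + V b) * exp (-K b) * exp (K b) := by
      rw [mul_assoc, ← exp_add, neg_add_cancel, exp_zero, mul_one]
    _ ≤ (A + ∫ τ in a..b, h τ * exp (-K τ)) * exp (K b) := by gcongr
    _ = _ := by rw [hweight]; ring

theorem sub_le_integral_of_hasDeriv_right_of_ae_le {u u' φ : ℝ → ℝ} {a b : ℝ} (hab : a ≤ b)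
    (hcont : ContinuousOn u (Icc a b)) (hderiv : ∀ x ∈ Ioo a b, HasDerivWithinAt u (u' x) (Ioi x) x)
    (hφ : IntegrableOn φ (Icc a b)) (hle : ∀ᵐ x, x ∈ Icc a b → u' x ≤ φ x) :
    u b - u a ≤ ∫ x in a..b, φ x := by
  have hmax : ∀ᵐ x, x ∈ Icc a b → max (u' x) (φ x) = φ x :=
    hle.mono fun x hx hxI ↦ max_eq_right (hx hxI)
  calc u b - u a ≤ ∫ x in a..b, max (u' x) (φ x) :=
        intervalIntegral.sub_le_integral_of_hasDeriv_right_of_le hab hcont hderiv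
          (hφ.congr_fun_ae (EventuallyEq.symm ((ae_restrict_iff' measurableSet_Icc).2 hmax)))
          fun x _ ↦ le_max_left _ _
    _ = ∫ x in a..b, φ x := intervalIntegral.integral_congr_ae <|
        hmax.mono fun x hx hxI ↦ hx (uIoc_subset_uIcc.trans (uIcc_of_le hab).subset hxI)

theorem le_mul_exp_add_integral_of_deriv_le {u u' g h : ℝ → ℝ} {a b : ℝ} (hab : a ≤ b)
    (hcont : ContinuousOn u (Icc a b)) (hderiv : ∀ x ∈ Ioo a b, HasDerivWithinAt u (u' x) (Ioi x) x)
    (hg : IntervalIntegrable g volume a b) (hh : IntervalIntegrable h volume a b)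
    (hg0 : ∀ t ∈ Icc a b, 0 ≤ g t) (hle : ∀ᵐ t, t ∈ Icc a b → u' t ≤ g t * u t + h t) :
    u b ≤ u a * exp (∫ τ in a..b, g τ) + ∫ τ in a..b, h τ * exp (∫ σ in τ..b, g σ) := by
  have hgu : IntegrableOn (fun τ ↦ g τ * u τ + h τ) (Icc a b) :=
    (intervalIntegrable_iff_integrableOn_Icc_of_le hab).1
      ((hg.mul_continuousOn (by rwa [uIcc_of_le hab])).add hh)
  refine le_mul_exp_add_integral_of_le_add_integral hab hcont hg hh hg0 fun t ht ↦ ?_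
  have := sub_le_integral_of_hasDeriv_right_of_ae_le ht.1
    (hcont.mono (Icc_subset_Icc_right ht.2)) (fun x hx ↦ hderiv x ⟨hx.1, hx.2.trans_le ht.2⟩)
    (hgu.mono_set (Icc_subset_Icc_right ht.2))
    (hle.mono fun x hx hxI ↦ hx ⟨hxI.1, hxI.2.trans ht.2⟩)
  linarith

theorem exists_mul_one_add_rpow_le_add_mul {K c β : ℝ} (hK : 0 ≤ K) (hc : 0 < c) (hβ0 : 0 ≤ β)
    (hβ1 : β < 1) : ∃ C, 0 ≤ C ∧ ∀ x, 0 ≤ x → K * (1 + x ^ β) ≤ C + c * x := by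
  set M := (K / c) ^ (1 - β)⁻¹
  have hM : 0 ≤ M := rpow_nonneg (div_nonneg hK hc.le) _
  refine ⟨K * (1 + M ^ β), by positivity, fun x hx ↦ ?_⟩
  rcases le_or_gt x M with hxM | hMx
  · nlinarith [mul_le_mul_of_nonneg_left (rpow_le_rpow hx hxM hβ0) hK]
  · -- past `M = (K / c) ^ (1 / (1 - β))` the linear term dominates: `K x ^ β ≤ c x`
    have hKc : K < x ^ (1 - β) * c := by
      rw [← div_lt_iff₀ hc]
      calc K / c = M ^ (1 - β) := (rpow_inv_rpow (div_nonneg hK hc.le) (by linarith)).symm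
        _ < x ^ (1 - β) := rpow_lt_rpow hM hMx (by linarith)
    have hsplit : x ^ (1 - β) * x ^ β = x := by
      rw [← rpow_add (hM.trans_lt hMx), sub_add_cancel, rpow_one]
    have : K * x ^ β ≤ c * x := by
      calc K * x ^ β ≤ x ^ (1 - β) * c * x ^ β :=
            mul_le_mul_of_nonneg_right hKc.le (rpow_nonneg hx _)
        _ = c * x := by rw [mul_right_comm, hsplit, mul_comm]
    nlinarith [mul_nonneg hK (rpow_nonneg hM β)]

theorem integral_mul_exp_neg_le_of_forall_integral_le {f : ℝ → ℝ} {s t₀ F r : ℝ} (hr : 0 < r)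
    (hf0 : ∀ t ∈ Icc s t₀, 0 ≤ f t) (hf : IntervalIntegrable f volume s t₀)
    (hF : ∀ t ∈ Icc s t₀, ∫ τ in t..min t₀ (t + 1), f τ ≤ F) {t : ℝ} (ht : t ∈ Icc s t₀) :
    ∫ τ in s..t, f τ * exp (-r * (t - τ)) ≤ F / (1 - exp (-r)) := by
  have hst : s ≤ t₀ := ht.1.trans ht.2
  have hq : 0 < 1 - exp (-r) := sub_pos.2 (exp_lt_one_iff.2 (neg_lt_zero.2 hr))
  have hint : ∀ x y, s ≤ x → x ≤ y → y ≤ t₀ → IntervalIntegrable f volume x y :=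
    fun x y hx hxy hy ↦ hf.mono_set (by
      rw [uIcc_of_le hxy, uIcc_of_le hst]; exact Icc_subset_Icc hx hy)
  have hintw : ∀ u x y, s ≤ x → x ≤ y → y ≤ t₀ →
      IntervalIntegrable (fun τ ↦ f τ * exp (-r * (u - τ))) volume x y :=
    fun u x y hx hxy hy ↦ (hint x y hx hxy hy).mul_continuousOn (by fun_prop)
  have hwindow : ∀ x y, s ≤ x → x ≤ y → y ≤ t₀ → y ≤ x + 1 →
      ∫ τ in x..y, f τ * exp (-r * (y - τ)) ≤ F := fun x y hx hxy hy hy1 ↦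
    calc ∫ τ in x..y, f τ * exp (-r * (y - τ)) ≤ ∫ τ in x..y, f τ :=
          intervalIntegral.integral_mono_on hxy (hintw y x y hx hxy hy)
            (hint x y hx hxy hy) fun τ hτ ↦ mul_le_of_le_one_right
              (hf0 τ ⟨hx.trans hτ.1, hτ.2.trans hy⟩) (exp_le_one_iff.2 (by nlinarith [hτ.2]))
      _ ≤ ∫ τ in x..min t₀ (x + 1), f τ :=
          intervalIntegral.integral_mono_interval le_rfl hxy (le_min hy hy1)
            ((ae_restrict_iff' measurableSet_Ioc).2 (Eventually.of_forall fun τ hτ ↦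
              hf0 τ ⟨hx.trans hτ.1.le, hτ.2.trans (min_le_left _ _)⟩))
            (hint x _ hx (le_min (hxy.trans hy) (by linarith)) (min_le_left _ _))
      _ ≤ F := hF x ⟨hx, hxy.trans hy⟩
  have hF0 : 0 ≤ F := (hwindow s s le_rfl le_rfl hst (by linarith)).trans' (by simp)
  suffices ∀ k : ℕ, ∀ y ∈ Icc s t₀, y ≤ s + k →
      ∫ τ in s..y, f τ * exp (-r * (y - τ)) ≤ F / (1 - exp (-r)) from
    this ⌈t - s⌉₊ t ht (by linarith [Nat.le_ceil (t - s)])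
  intro k
  induction k with
  | zero =>
    intro y hy hys
    rw [le_antisymm (by simpa using hys) hy.1, intervalIntegral.integral_same]
    exact div_nonneg hF0 hq.le
  | succ k ih =>
    intro y hy hyk
    rcases le_or_gt y (s + 1) with h1 | h1
    · exact (hwindow s y le_rfl hy.1 hy.2 h1).trans (le_div_self hF0 hq (by simp [(exp_pos _).le]))
    -- the part of the integral older than one unit of time is damped by the factor `exp (-r)`
    have hs1 : s ≤ y - 1 := by linarith
    have hold : ∫ τ in s..y - 1, f τ * exp (-r * (y - τ))
        = exp (-r) * ∫ τ in s..y - 1, f τ * exp (-r * (y - 1 - τ)) := by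
      rw [← intervalIntegral.integral_const_mul]
      congr 1 with τ
      rw [mul_left_comm, ← exp_add]
      ring_nf
    rw [← intervalIntegral.integral_add_adjacent_intervals (hintw y s (y - 1) le_rfl hs1
      (by linarith [hy.2])) (hintw y (y - 1) y hs1 (by linarith) hy.2), hold]
    calc _ ≤ exp (-r) * (F / (1 - exp (-r))) + F :=
          add_le_add (mul_le_mul_of_nonneg_left
            (ih (y - 1) ⟨hs1, by linarith [hy.2]⟩ (by push_cast at hyk; linarith)) (exp_pos _).le)
            (hwindow (y - 1) y hs1 (by linarith) hy.2 (by linarith))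
      _ = F / (1 - exp (-r)) := by field_simp; ring

theorem le_exp_mul_of_deriv_add_mul_le {Φ Φ' f g : ℝ → ℝ} {s t₀ c d C : ℝ} (hst : s ≤ t₀)
    (hΦ : ∀ t ∈ Icc s t₀, HasDerivAt Φ (Φ' t) t) (hΦs : 0 ≤ Φ s)
    (hf0 : ∀ t ∈ Icc s t₀, 0 ≤ f t) (hg0 : ∀ t ∈ Icc s t₀, 0 ≤ g t)
    (hf : IntervalIntegrable f volume s t₀) (hg : IntervalIntegrable g volume s t₀)
    (hle : ∀ᵐ t, t ∈ Icc s t₀ → Φ' t + c * Φ t ≤ g t * Φ t + f t)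
    (hgC : ∀ τ ∈ Icc s t₀, ∫ σ in τ..t₀, g σ ≤ C + d * (t₀ - τ)) :
    Φ t₀ ≤ exp C * (Φ s * exp (-(c - d) * (t₀ - s)) +
      ∫ τ in s..t₀, f τ * exp (-(c - d) * (t₀ - τ))) := by
  have hψ : ∀ t ∈ Icc s t₀, HasDerivAt (fun t ↦ Φ t * exp (c * t))
      ((Φ' t + c * Φ t) * exp (c * t)) t := fun t ht ↦
    ((hΦ t ht).mul ((hasDerivAt_id' t).const_mul c).exp).congr_deriv (by ring)
  have hexp : ContinuousOn (fun τ ↦ exp (c * τ)) (uIcc s t₀) := by fun_prop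
  have hgron := le_mul_exp_add_integral_of_deriv_le (h := fun τ ↦ f τ * exp (c * τ)) hst
    (fun t ht ↦ (hψ t ht).continuousAt.continuousWithinAt)
    (fun t ht ↦ (hψ t (Ioo_subset_Icc_self ht)).hasDerivWithinAt) hg
    (hf.mul_continuousOn hexp) hg0
    (hle.mono fun t ht htI ↦ by
      nlinarith [mul_le_mul_of_nonneg_right (ht htI) (exp_pos (c * t)).le])
  have hsrc : ∫ τ in s..t₀, f τ * exp (c * τ) * exp (∫ σ in τ..t₀, g σ)
      ≤ ∫ τ in s..t₀, f τ * exp (c * τ) * exp (C + d * (t₀ - τ)) := by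
    refine intervalIntegral.integral_mono_on hst ?_
      ((hf.mul_continuousOn hexp).mul_continuousOn (by fun_prop))
      fun τ hτ ↦ by gcongr; exacts [mul_nonneg (hf0 τ hτ) (exp_pos _).le, hgC τ hτ]
    refine (hf.mul_continuousOn hexp).mul_continuousOn (ContinuousOn.rexp ?_)
    exact intervalIntegral.continuousOn_primitive_interval_left
      ((intervalIntegrable_iff_integrableOn_Icc_of_le hst).1 hg |>.mono_set (uIcc_of_le hst).subset)
  have hinit : Φ s * exp (c * s) * exp (∫ σ in s..t₀, g σ)
      ≤ Φ s * exp (c * s) * exp (C + d * (t₀ - s)) := by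
    gcongr
    exact hgC s (left_mem_Icc.2 hst)
  have hexp_init : exp (c * s) * exp (C + d * (t₀ - s))
      = exp C * exp (-(c - d) * (t₀ - s)) * exp (c * t₀) := by
    simp only [← exp_add]; ring_nf
  have hsrc_eq : ∫ τ in s..t₀, f τ * exp (c * τ) * exp (C + d * (t₀ - τ))
      = exp C * exp (c * t₀) * ∫ τ in s..t₀, f τ * exp (-(c - d) * (t₀ - τ)) := by
    rw [← intervalIntegral.integral_const_mul]
    congr 1 with τ
    rw [mul_assoc, ← exp_add, ← exp_add, mul_left_comm, ← exp_add]
    ring_nf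
  rw [← mul_le_mul_iff_of_pos_right (exp_pos (c * t₀))]
  calc Φ t₀ * exp (c * t₀) ≤ _ := hgron
    _ ≤ Φ s * exp (c * s) * exp (C + d * (t₀ - s)) +
        ∫ τ in s..t₀, f τ * exp (c * τ) * exp (C + d * (t₀ - τ)) := add_le_add hinit hsrc
    _ = _ := by rw [hsrc_eq]; linear_combination Φ s * hexp_init

theorem stmt14 (ε G β : ℝ) (hε : 0 < ε) (hG : 0 < G) (hβ0 : 0 ≤ β) (hβ1 : β < 1) :
    ∃ Γ : ℝ, 1 ≤ Γ ∧
      ∀ (s t₀ : ℝ) (Φ Φ' f g : ℝ → ℝ) (F : ℝ), 0 < F → s ≤ t₀ →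
        (∀ t ∈ Set.Icc s t₀, HasDerivAt Φ (Φ' t) t) →
        (∀ t ∈ Set.Icc s t₀, 0 ≤ Φ t) →
        (∀ t ∈ Set.Icc s t₀, 0 ≤ f t) → (∀ t ∈ Set.Icc s t₀, 0 ≤ g t) →
        IntervalIntegrable f MeasureTheory.volume s t₀ →
        IntervalIntegrable g MeasureTheory.volume s t₀ →
        (∀ᵐ t ∂MeasureTheory.volume, t ∈ Set.Icc s t₀ →
          Φ' t + 2 * ε * Φ t ≤ g t * Φ t + f t) →
        (∀ t ∈ Set.Icc s t₀, (∫ τ in t..min t₀ (t + 1), f τ) ≤ F) →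
        (∀ t₁ t₂, s ≤ t₁ → t₁ ≤ t₂ → t₂ ≤ t₀ →
          (∫ τ in t₁..t₂, g τ) ≤ G * (1 + (t₂ - t₁) ^ β)) →
        Φ t₀ ≤ Γ * Φ s * Real.exp (-ε * (t₀ - s)) +
          Γ * F * Real.exp ε / (1 - Real.exp (-ε)) := by
  obtain ⟨C, hC0, hC⟩ := exists_mul_one_add_rpow_le_add_mul hG.le hε hβ0 hβ1
  refine ⟨exp C, one_le_exp hC0, ?_⟩
  intro s t₀ Φ Φ' f g F hF hst hΦ' hΦ hf0 hg0 hf hg hle hf_window hg_window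
  have hdecay := le_exp_mul_of_deriv_add_mul_le (d := ε) hst hΦ' (hΦ s (left_mem_Icc.2 hst))
    hf0 hg0 hf hg hle fun τ hτ ↦
      (hg_window τ t₀ hτ.1 hτ.2 le_rfl).trans (hC _ (sub_nonneg.2 hτ.2))
  rw [show 2 * ε - ε = ε by ring] at hdecay
  have hsrc := integral_mul_exp_neg_le_of_forall_integral_le hε hf0 hf hf_window
    (right_mem_Icc.2 hst)
  have hq : 0 < 1 - exp (-ε) := sub_pos.2 (exp_lt_one_iff.2 (neg_lt_zero.2 hε))
  have hsrc' : ∫ τ in s..t₀, f τ * exp (-ε * (t₀ - τ)) ≤ F * exp ε / (1 - exp (-ε)) :=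
    hsrc.trans (by gcongr; exact le_mul_of_one_le_right hF.le (one_le_exp hε.le))
  calc Φ t₀ ≤ exp C * (Φ s * exp (-ε * (t₀ - s)) + F * exp ε / (1 - exp (-ε))) := by
        grw [hdecay, hsrc']
    _ = _ := by ring
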